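/- arXiv:2112.07377 — 2 statements merged into one kernel-verified Lean document; each statement's English description precedes it below -/
import Mathlib

section
/- The antecedent-introduction rules (from Γ,(φ₁,k₁),…,(φ_ℓ,k_ℓ) → Δ for all tuples (k₁,…,k_ℓ) with v_k ∈ ∗(v_{k₁},…,v_{k_ℓ}), infer Γ,(∗(φ₁,…,φ_ℓ),k) → Δ) are derivable in NMVL_R. -/
/-- Formulas over a set `C` of connectives (applied to lists of arguments). -/
inductive Fm (C : Type) : Type
  | atom : ℕ → Fm C
  | app : C → List (Fm C) → Fm C

noncomputable instance {C : Type} : DecidableEq (Fm C) := Classical.decEq _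

/-- A sequent of finite sets of labelled formulas. -/
structure Sequent (C : Type) [DecidableEq C] (n : ℕ) where
  ant : Finset (Fm C × Fin n)
  suc : Finset (Fm C × Fin n)

variable {C : Type} [DecidableEq C] {n : ℕ}

/-- A valuation legal w.r.t. the non-deterministic tables `tbl`. -/
def IsVal (tbl : C → List (Fin n) → Finset (Fin n)) (v : Fm C → Fin n) : Prop :=
  ∀ c args, v (Fm.app c args) ∈ tbl c (args.map v)

/-- A valuation satisfies a sequent. -/
def Sat (v : Fm C → Fin n) (S : Sequent C n) : Prop :=
  (∀ p ∈ S.ant, v p.1 = p.2) → ∃ p ∈ S.suc, v p.1 = p.2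

/-- Semantic entailment. -/
def Entails (tbl : C → List (Fin n) → Finset (Fin n)) (H : Set (Sequent C n)) (S : Sequent C n) : Prop :=
  ∀ v : Fm C → Fin n, IsVal tbl v → (∀ T ∈ H, Sat v T) → Sat v S

/-- The family (∗(φ₁,…,φ_ℓ)×k)⁻¹ of antecedent sets. -/
def Theta (tbl : C → List (Fin n) → Finset (Fin n)) (c : C) (args : List (Fm C)) (k : Fin n) :
    Set (Finset (Fm C × Fin n)) :=
  { Θ | ∃ ks : List (Fin n), ks.length = args.length ∧ k ∈ tbl c ks ∧ Θ = (args.zip ks).toFinset }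

/-- Λ ∈ ⋁(∗(φ₁,…,φ_ℓ)×k)⁻¹ : a choice set hitting each Θ_q and contained in their union. -/
def Choice (tbl : C → List (Fin n) → Finset (Fin n)) (c : C) (args : List (Fm C)) (k : Fin n)
    (Λ : Finset (Fm C × Fin n)) : Prop :=
  (∀ Θ ∈ Theta tbl c args k, ∃ x ∈ Θ, x ∈ Λ) ∧
  (∀ x ∈ Λ, ∃ Θ ∈ Theta tbl c args k, x ∈ Θ)

/-- Which optional axioms/rules a calculus has. -/
structure Rules where
  tableAx : Bool      -- table axioms (2)
  tableRuleS : Bool   -- succedent table rules (10)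
  dualAx : Bool       -- distributively dual axioms (13)
  anteRule : Bool     -- antecedent introduction rules (17)
  multiShift : Bool   -- K-L-multi-shift (16)
  cut : Bool
  res : Bool

/-- Derivability from hypothesis sequents `H`; axioms (ψ,k)→(ψ,k), L-shift, R-shift and
weakenings are always present, the other axioms/rules are governed by `R`. -/
inductive Deriv (R : Rules) (tbl : C → List (Fin n) → Finset (Fin n)) (H : Set (Sequent C n)) :
    Sequent C n → Prop
  | hyp {S} : S ∈ H → Deriv R tbl H S
  | ax (ψ : Fm C) (k : Fin n) : Deriv R tbl H ⟨{(ψ, k)}, {(ψ, k)}⟩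
  | tableAx (c : C) (args : List (Fm C)) (ks : List (Fin n))
      (hlen : ks.length = args.length) (h : R.tableAx = true) :
      Deriv R tbl H ⟨(args.zip ks).toFinset, (tbl c ks).image (fun k => (Fm.app c args, k))⟩
  | lshift {Γ Δ} (φ : Fm C) (k : Fin n) :
      Deriv R tbl H ⟨insert (φ, k) Γ, Δ⟩ →
      Deriv R tbl H ⟨Γ, Δ ∪ ({k}ᶜ : Finset (Fin n)).image (fun k' => (φ, k'))⟩
  | rshift {Γ Δ} (φ : Fm C) {k' k'' : Fin n} (h : k' ≠ k'') :
      Deriv R tbl H ⟨Γ, insert (φ, k') Δ⟩ → Deriv R tbl H ⟨insert (φ, k'') Γ, Δ⟩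
  | lweak {Γ Δ} (φ : Fm C) (k : Fin n) :
      Deriv R tbl H ⟨Γ, Δ⟩ → Deriv R tbl H ⟨insert (φ, k) Γ, Δ⟩
  | rweak {Γ Δ} (φ : Fm C) (k : Fin n) :
      Deriv R tbl H ⟨Γ, Δ⟩ → Deriv R tbl H ⟨Γ, insert (φ, k) Δ⟩
  | cut {Γ Δ} (φ : Fm C) (k : Fin n) (h : R.cut = true) :
      Deriv R tbl H ⟨Γ, insert (φ, k) Δ⟩ → Deriv R tbl H ⟨insert (φ, k) Γ, Δ⟩ →
      Deriv R tbl H ⟨Γ, Δ⟩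
  | res {Γ Δ' Δ''} (φ : Fm C) {k' k'' : Fin n} (h : R.res = true) (hk : k' ≠ k'') :
      Deriv R tbl H ⟨Γ, insert (φ, k') Δ'⟩ → Deriv R tbl H ⟨Γ, insert (φ, k'') Δ''⟩ →
      Deriv R tbl H ⟨Γ, Δ' ∪ Δ''⟩
  | tableRuleS {Γ Δ} (c : C) (args : List (Fm C)) (ks : List (Fin n))
      (hlen : ks.length = args.length) (h : R.tableRuleS = true)
      (prem : ∀ p ∈ args.zip ks, Deriv R tbl H ⟨Γ, insert p Δ⟩) :
      Deriv R tbl H ⟨Γ, Δ ∪ (tbl c ks).image (fun k => (Fm.app c args, k))⟩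
  | dualAx (c : C) (args : List (Fm C)) (k : Fin n) (Λ : Finset (Fm C × Fin n))
      (h : R.dualAx = true) (hΛ : Choice tbl c args k Λ) :
      Deriv R tbl H ⟨{(Fm.app c args, k)}, Λ⟩
  | anteRule {Γ Δ} (c : C) (args : List (Fm C)) (k : Fin n) (h : R.anteRule = true)
      (prem : ∀ ks : List (Fin n), ks.length = args.length → k ∈ tbl c ks →
        Deriv R tbl H ⟨Γ ∪ (args.zip ks).toFinset, Δ⟩) :
      Deriv R tbl H ⟨insert (Fm.app c args, k) Γ, Δ⟩
  | multiShift {Γ Δ} (φ : Fm C) (K : Finset (Fin n)) (h : R.multiShift = true)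
      (hK : K ≠ Finset.univ)
      (prem : ∀ k ∈ K, Deriv R tbl H ⟨insert (φ, k) Γ, Δ⟩) :
      Deriv R tbl H ⟨Γ, Δ ∪ Kᶜ.image (fun k' => (φ, k'))⟩

/-- NMVL_A : table axioms, cut and resolution. -/
def NMVL_A : Rules := ⟨true, false, false, false, false, true, true⟩
/-- NMVL_A with cut but without resolution. -/
def NMVL_A_cut : Rules := ⟨true, false, false, false, false, true, false⟩
/-- NMVL_A with resolution but without cut. -/
def NMVL_A_res : Rules := ⟨true, false, false, false, false, false, true⟩
/-- NMVL_R : succedent table rules, cut and resolution. -/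
def NMVL_R : Rules := ⟨false, true, false, false, false, true, true⟩
/-- NMVL_R without cut and resolution. -/
def NMVL_R_cf : Rules := ⟨false, true, false, false, false, false, false⟩
/-- NMVL_A^dd : distributively dual axioms, cut and resolution. -/
def NMVL_Add : Rules := ⟨false, false, true, false, false, true, true⟩
/-- NMVL_R^sd : antecedent table rules, multi-shift, cut and resolution. -/
def NMVL_Rsd : Rules := ⟨false, false, false, true, true, true, true⟩

/-!
Cutting on every label of each argument `φᵢ` reduces the conclusion to the sequents
`Γ, (∗(φ₁,…,φ_ℓ), k), (φ₁,k₁), …, (φ_ℓ,k_ℓ) → Δ`, one for each tuple `(k₁,…,k_ℓ)`.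
If `k ∈ ∗(k₁,…,k_ℓ)` this is a weakening of a premise. Otherwise the succedent table rule,
applied to axioms, gives `Γ, (φ₁,k₁), …, (φ_ℓ,k_ℓ) → Δ, {(∗(φ₁,…,φ_ℓ), k') : k' ∈ ∗(k₁,…,k_ℓ)}`,
and since every such `k'` differs from `k`, R-shifts move all of these formulas into the
antecedent as the single formula `(∗(φ₁,…,φ_ℓ), k)`.
-/

namespace Deriv

variable {R : Rules} {tbl : C → List (Fin n) → Finset (Fin n)} {H : Set (Sequent C n)}

theorem weaken_left {Γ Δ : Finset (Fm C × Fin n)} (E : Finset (Fm C × Fin n))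
    (h : Deriv R tbl H ⟨Γ, Δ⟩) : Deriv R tbl H ⟨Γ ∪ E, Δ⟩ := by
  induction E using Finset.induction_on with
  | empty => simpa using h
  | insert a s _ ih =>
      rw [Finset.union_insert]
      exact lweak a.1 a.2 ih

theorem weaken_right {Γ Δ : Finset (Fm C × Fin n)} (E : Finset (Fm C × Fin n))
    (h : Deriv R tbl H ⟨Γ, Δ⟩) : Deriv R tbl H ⟨Γ, Δ ∪ E⟩ := by
  induction E using Finset.induction_on with
  | empty => simpa using h
  | insert a s _ ih =>
      rw [Finset.union_insert]
      exact rweak a.1 a.2 ih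

theorem mono {Γ Δ Γ' Δ' : Finset (Fm C × Fin n)} (hΓ : Γ ⊆ Γ') (hΔ : Δ ⊆ Δ')
    (h : Deriv R tbl H ⟨Γ, Δ⟩) : Deriv R tbl H ⟨Γ', Δ'⟩ := by
  have h' := weaken_right Δ' (weaken_left Γ' h)
  rwa [Finset.union_eq_right.mpr hΓ, Finset.union_eq_right.mpr hΔ] at h'

theorem of_mem_of_mem {Γ Δ : Finset (Fm C × Fin n)} {p : Fm C × Fin n} (hΓ : p ∈ Γ)
    (hΔ : p ∈ Δ) : Deriv R tbl H ⟨Γ, Δ⟩ :=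
  mono (Finset.singleton_subset_iff.mpr hΓ) (Finset.singleton_subset_iff.mpr hΔ) (ax p.1 p.2)

theorem insert_left_of_union_image_right (φ : Fm C) {k : Fin n} {S : Finset (Fin n)}
    (hk : k ∉ S) {Γ Δ : Finset (Fm C × Fin n)}
    (h : Deriv R tbl H ⟨Γ, Δ ∪ S.image fun k' => (φ, k')⟩) :
    Deriv R tbl H ⟨insert (φ, k) Γ, Δ⟩ := by
  induction S using Finset.induction_on generalizing Γ with
  | empty => exact lweak φ k (by simpa using h)
  | insert a s _ ih =>
      rw [Finset.image_insert, Finset.union_insert] at h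
      have hak : a ≠ k := fun e => hk (e ▸ Finset.mem_insert_self a s)
      have h' := ih (fun e => hk (Finset.mem_insert_of_mem e)) (rshift φ hak h)
      rwa [Finset.insert_idem] at h'

theorem cut_union_image (hcut : R.cut = true) (φ : Fm C) {Γ Δ : Finset (Fm C × Fin n)}
    {S : Finset (Fin n)} (h : Deriv R tbl H ⟨Γ, Δ ∪ S.image fun k' => (φ, k')⟩)
    (hS : ∀ j ∈ S, Deriv R tbl H ⟨insert (φ, j) Γ, Δ⟩) : Deriv R tbl H ⟨Γ, Δ⟩ := by
  induction S using Finset.induction_on with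
  | empty => simpa using h
  | insert a s _ ih =>
      rw [Finset.image_insert, Finset.union_insert] at h
      have ha := weaken_right (s.image fun k' => (φ, k')) (hS a (Finset.mem_insert_self a s))
      exact ih (cut φ a hcut h ha) fun j hj => hS j (Finset.mem_insert_of_mem hj)

theorem of_forall_insert_left [NeZero n] (hcut : R.cut = true) (φ : Fm C)
    {Γ Δ : Finset (Fm C × Fin n)} (h : ∀ j : Fin n, Deriv R tbl H ⟨insert (φ, j) Γ, Δ⟩) :
    Deriv R tbl H ⟨Γ, Δ⟩ :=
  cut_union_image hcut φ (lshift φ 0 (h 0)) fun j _ => h j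

theorem of_forall_union_zip [NeZero n] (hcut : R.cut = true) (fs : List (Fm C))
    {Γ Δ : Finset (Fm C × Fin n)}
    (h : ∀ ks : List (Fin n), ks.length = fs.length →
      Deriv R tbl H ⟨Γ ∪ (fs.zip ks).toFinset, Δ⟩) :
    Deriv R tbl H ⟨Γ, Δ⟩ := by
  induction fs generalizing Γ with
  | nil => simpa using h [] rfl
  | cons f fs ih =>
      refine of_forall_insert_left hcut f fun j => ih fun ks hks => ?_
      have hjks := h (j :: ks) (by simpa using hks)
      rwa [List.zip_cons_cons, List.toFinset_cons, Finset.union_insert,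
        ← Finset.insert_union] at hjks

theorem insert_app_union_zip_of_notMem_tbl (hrule : R.tableRuleS = true) (c : C)
    {args : List (Fm C)} {ks : List (Fin n)} (hks : ks.length = args.length) {k : Fin n}
    (hk : k ∉ tbl c ks) (Γ Δ : Finset (Fm C × Fin n)) :
    Deriv R tbl H ⟨insert (Fm.app c args, k) (Γ ∪ (args.zip ks).toFinset), Δ⟩ :=
  insert_left_of_union_image_right _ hk <| tableRuleS c args ks hks hrule fun _ hp =>
    of_mem_of_mem (Finset.mem_union_right _ (List.mem_toFinset.mpr hp))
      (Finset.mem_insert_self _ _)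

theorem anteRule_of_cut_of_tableRuleS [NeZero n] (hcut : R.cut = true)
    (hrule : R.tableRuleS = true) {Γ Δ : Finset (Fm C × Fin n)} (c : C) (args : List (Fm C))
    (k : Fin n)
    (prem : ∀ ks : List (Fin n), ks.length = args.length → k ∈ tbl c ks →
      Deriv R tbl H ⟨Γ ∪ (args.zip ks).toFinset, Δ⟩) :
    Deriv R tbl H ⟨insert (Fm.app c args, k) Γ, Δ⟩ := by
  refine of_forall_union_zip hcut args fun ks hks => ?_
  rw [Finset.insert_union]
  by_cases hk : k ∈ tbl c ks
  · exact lweak _ k (prem ks hks hk)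
  · exact insert_app_union_zip_of_notMem_tbl hrule c hks hk Γ Δ

end Deriv

theorem stmt14_general (tbl : C → List (Fin n) → Finset (Fin n))
    (H : Set (Sequent C n))
    (Γ Δ : Finset (Fm C × Fin n)) (c : C) (args : List (Fm C)) (k : Fin n)
    (prem : ∀ ks : List (Fin n), ks.length = args.length → k ∈ tbl c ks →
      Deriv NMVL_R tbl H ⟨Γ ∪ (args.zip ks).toFinset, Δ⟩) :
    Deriv NMVL_R tbl H ⟨insert (Fm.app c args, k) Γ, Δ⟩ :=
  have : NeZero n := NeZero.of_pos k.pos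
  Deriv.anteRule_of_cut_of_tableRuleS rfl rfl c args k prem

/-- the antecedent-introduction rules are derivable in NMVL_R. -/
theorem stmt14 (hn : 2 ≤ n) (tbl : C → List (Fin n) → Finset (Fin n))
    (htbl : ∀ c ks, (tbl c ks).Nonempty) (H : Set (Sequent C n))
    (Γ Δ : Finset (Fm C × Fin n)) (c : C) (args : List (Fm C)) (k : Fin n)
    (prem : ∀ ks : List (Fin n), ks.length = args.length → k ∈ tbl c ks →
      Deriv NMVL_R tbl H ⟨Γ ∪ (args.zip ks).toFinset, Δ⟩) :
    Deriv NMVL_R tbl H ⟨insert (Fm.app c args, k) Γ, Δ⟩ :=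
  stmt14_general tbl H Γ Δ c args k prem
end

section
/- In any system containing axioms (ψ,k)→(ψ,k), R-weakening, and the k′,k″-resolution rule, if Γ → Δ, {(φ,k) : k ∈ K} is derivable and k₀ ∉ K, then together with the axiom (φ,k₀)→(φ,k₀) one can derive Γ, (φ,k₀) → Δ by |K| resolutions; in particular, from a table axiom weakened with Δ and the assumption v_{k₀} ∉ ∗(v_{k₁},…,v_{k_ℓ}), the sequent (φ* , k₀), (φ₁,k₁),…,(φ_ℓ,k_ℓ) → Δ is derivable, where φ* = ∗(φ₁,…,φ_ℓ). -/
variable {C : Type} [DecidableEq C] {n : ℕ}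

/-! Adding `(φ, k₀)` to the antecedent makes the weakened axiom `Γ, (φ, k₀) → (φ, k₀)` available;
resolving it against each label `k ∈ K` (all different from `k₀`) removes `(φ, k)` from the succedent
one at a time. A table axiom with `v_{k₀} ∉ ∗(v_{k₁},…,v_{k_ℓ})`, weakened by `Δ`, is the case
`K = ∗(v_{k₁},…,v_{k_ℓ})`. -/

namespace Deriv

variable {R : Rules} {tbl : C → List (Fin n) → Finset (Fin n)} {H : Set (Sequent C n)}

theorem lweak_union {Γ₀ Δ : Finset (Fm C × Fin n)} (Γ : Finset (Fm C × Fin n))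
    (h : Deriv R tbl H ⟨Γ₀, Δ⟩) : Deriv R tbl H ⟨Γ ∪ Γ₀, Δ⟩ := by
  induction Γ using Finset.induction with
  | empty => simpa using h
  | insert p Γ _ ih =>
    rw [Finset.insert_union]
    exact lweak p.1 p.2 ih

theorem rweak_union {Γ Δ₀ : Finset (Fm C × Fin n)} (Δ : Finset (Fm C × Fin n))
    (h : Deriv R tbl H ⟨Γ, Δ₀⟩) : Deriv R tbl H ⟨Γ, Δ ∪ Δ₀⟩ := by
  induction Δ using Finset.induction with
  | empty => simpa using h
  | insert p Δ _ ih =>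
    rw [Finset.insert_union]
    exact rweak p.1 p.2 ih

theorem ax_of_mem {Γ : Finset (Fm C × Fin n)} {φ : Fm C} {k : Fin n} (hmem : (φ, k) ∈ Γ) :
    Deriv R tbl H ⟨Γ, {(φ, k)}⟩ := by
  have h := lweak_union Γ (ax (R := R) (tbl := tbl) (H := H) φ k)
  rwa [Finset.union_eq_left.mpr (Finset.singleton_subset_iff.mpr hmem)] at h

theorem res_of_mem (hres : R.res = true) {Γ Δ : Finset (Fm C × Fin n)} {φ : Fm C}
    {k k₀ : Fin n} (hk : k ≠ k₀) (hmem : (φ, k₀) ∈ Γ)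
    (h : Deriv R tbl H ⟨Γ, insert (φ, k) Δ⟩) : Deriv R tbl H ⟨Γ, Δ⟩ := by
  simpa using res (Δ'' := ∅) φ hres hk h (ax_of_mem hmem)

theorem res_image_of_mem (hres : R.res = true) {Γ Δ : Finset (Fm C × Fin n)} {φ : Fm C}
    {K : Finset (Fin n)} {k₀ : Fin n} (hk₀ : k₀ ∉ K) (hmem : (φ, k₀) ∈ Γ)
    (h : Deriv R tbl H ⟨Γ, Δ ∪ K.image (fun k => (φ, k))⟩) : Deriv R tbl H ⟨Γ, Δ⟩ := by
  induction K using Finset.induction with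
  | empty => simpa using h
  | insert k K _ ih =>
    rw [Finset.mem_insert, not_or] at hk₀
    rw [Finset.image_insert, Finset.union_insert] at h
    exact ih hk₀.2 (res_of_mem hres (Ne.symm hk₀.1) hmem h)

theorem insert_of_res_image (hres : R.res = true) {Γ Δ : Finset (Fm C × Fin n)} {φ : Fm C}
    {K : Finset (Fin n)} {k₀ : Fin n} (hk₀ : k₀ ∉ K)
    (h : Deriv R tbl H ⟨Γ, Δ ∪ K.image (fun k => (φ, k))⟩) :
    Deriv R tbl H ⟨insert (φ, k₀) Γ, Δ⟩ :=
  res_image_of_mem hres hk₀ (Finset.mem_insert_self _ _) (lweak φ k₀ h)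

end Deriv

theorem stmt18_general (tbl : C → List (Fin n) → Finset (Fin n))
    (H : Set (Sequent C n)) :
    (∀ (R : Rules), R.res = true →
      ∀ (Γ Δ : Finset (Fm C × Fin n)) (φ : Fm C) (K : Finset (Fin n)) (k₀ : Fin n),
        k₀ ∉ K → Deriv R tbl H ⟨Γ, Δ ∪ K.image (fun k => (φ, k))⟩ →
        Deriv R tbl H ⟨insert (φ, k₀) Γ, Δ⟩) ∧
    (∀ (R : Rules), R.res = true → R.tableAx = true →
      ∀ (Δ : Finset (Fm C × Fin n)) (c : C) (args : List (Fm C)) (ks : List (Fin n))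
        (k₀ : Fin n), ks.length = args.length → k₀ ∉ tbl c ks →
        Deriv R tbl H ⟨insert (Fm.app c args, k₀) (args.zip ks).toFinset, Δ⟩) := by
  refine ⟨fun R hres Γ Δ φ K k₀ hk₀ h => Deriv.insert_of_res_image hres hk₀ h, ?_⟩
  intro R hres htab Δ c args ks k₀ hlen hk₀
  exact Deriv.insert_of_res_image hres hk₀
    (Deriv.rweak_union Δ (Deriv.tableAx c args ks hlen htab))

/-- derivations by repeated resolutions against the axiom (φ,k₀)→(φ,k₀),
and the particular instance starting from a weakened table axiom. -/
theorem stmt18 (hn : 2 ≤ n) (tbl : C → List (Fin n) → Finset (Fin n))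
    (htbl : ∀ c ks, (tbl c ks).Nonempty) (H : Set (Sequent C n)) :
    (∀ (R : Rules), R.res = true →
      ∀ (Γ Δ : Finset (Fm C × Fin n)) (φ : Fm C) (K : Finset (Fin n)) (k₀ : Fin n),
        k₀ ∉ K → Deriv R tbl H ⟨Γ, Δ ∪ K.image (fun k => (φ, k))⟩ →
        Deriv R tbl H ⟨insert (φ, k₀) Γ, Δ⟩) ∧
    (∀ (R : Rules), R.res = true → R.tableAx = true →
      ∀ (Δ : Finset (Fm C × Fin n)) (c : C) (args : List (Fm C)) (ks : List (Fin n))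
        (k₀ : Fin n), ks.length = args.length → k₀ ∉ tbl c ks →
        Deriv R tbl H ⟨insert (Fm.app c args, k₀) (args.zip ks).toFinset, Δ⟩) :=
  stmt18_general tbl H
end
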